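/- (sat characterizes membership) Let Q be a query with predicate p of arity n, ũ a sequence of n terms, and v a valuation. Then p([ũ]_v) ∈ Set(Q) if and only if D ⊨_v sat(ũ, Q), where sat(ũ, Q) := ∃_{Var(Q')} (ũ = t̃' ∧ d') for any variant Q' = ⟨p(t̃') | d'⟩ of Q variable-disjoint from ũ. -/

import Mathlib

/- A semantic formalization of CLP(X) queries, clauses, derivation steps,
   filters and derivation-neutrality, following Payet & Mesnard. -/

namespace CLP

variable {V D Pr : Type}

/-- A (semantic) term: its evaluation under every valuation. -/
abbrev Trm (V D : Type) := (V → D) → D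
/-- A (semantic) constraint: its truth value under every valuation. -/
abbrev Cns (V D : Type) := (V → D) → Prop

/-- The term consisting of a single variable. -/
def varT (x : V) : Trm V D := fun v => v x

/-- An atom whose arguments are domain elements. -/
structure Atom (D Pr : Type) where
  pred : Pr
  args : List D

/-- A query ⟨p(t̃) | d⟩. -/
structure Query (V D Pr : Type) where
  pred : Pr
  args : List (Trm V D)
  constr : Cns V D

/-- The set of atoms described by a query: Set(⟨p(t̃) | d⟩) = {p([t̃]_v) | D ⊨_v d}. -/
def Query.descSet (Q : Query V D Pr) : Set (Atom D Pr) :=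
  { A | ∃ v : V → D, Q.constr v ∧ A = ⟨Q.pred, Q.args.map (fun t => t v)⟩ }

/-- Applying a renaming (a bijection on variables) to a query. -/
def Query.rename (γ : V ≃ V) (Q : Query V D Pr) : Query V D Pr :=
  ⟨Q.pred, Q.args.map (fun t v => t (v ∘ γ)), fun v => Q.constr (v ∘ γ)⟩

/-- A term only depends on (is supported by) the variables in `S`. -/
def Trm.supp (t : Trm V D) (S : Set V) : Prop :=
  ∀ v w : V → D, (∀ x ∈ S, v x = w x) → t v = t w

/-- A constraint only depends on (is supported by) the variables in `S`. -/
def Cns.supp (c : Cns V D) (S : Set V) : Prop :=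
  ∀ v w : V → D, (∀ x ∈ S, v x = w x) → (c v ↔ c w)

/-- All the variables of the query lie in `S`. -/
def Query.suppBy (Q : Query V D Pr) (S : Set V) : Prop :=
  (∀ t ∈ Q.args, Trm.supp t S) ∧ Cns.supp Q.constr S

/-- The query has finitely many variables (as every syntactic query does). -/
def Query.finSupp (Q : Query V D Pr) : Prop := ∃ S : Finset V, Q.suppBy ↑S

/-- The constraint s̃ = t̃ (componentwise equality of two sequences of terms). -/
def EqArgs (a b : List (Trm V D)) (v : V → D) : Prop :=
  a.length = b.length ∧ ∀ pr ∈ a.zip b, pr.1 v = pr.2 v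

/-- A binary clause H ← c ◇ B. -/
structure Clause (V D Pr : Type) where
  hpred : Pr
  hargs : List (Trm V D)
  constr : Cns V D
  bpred : Pr
  bargs : List (Trm V D)

/-- The query ⟨H | c⟩. -/
def Clause.headQuery (r : Clause V D Pr) : Query V D Pr := ⟨r.hpred, r.hargs, r.constr⟩
/-- The query ⟨B | c⟩. -/
def Clause.bodyQuery (r : Clause V D Pr) : Query V D Pr := ⟨r.bpred, r.bargs, r.constr⟩

/-- Applying a renaming to a clause (producing a variant of the clause). -/
def Clause.rename (γ : V ≃ V) (r : Clause V D Pr) : Clause V D Pr :=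
  ⟨r.hpred, r.hargs.map (fun t v => t (v ∘ γ)), fun v => r.constr (v ∘ γ),
   r.bpred, r.bargs.map (fun t v => t (v ∘ γ))⟩

/-- All the variables of the clause lie in `S`. -/
def Clause.suppBy (r : Clause V D Pr) (S : Set V) : Prop :=
  (∀ t ∈ r.hargs ++ r.bargs, Trm.supp t S) ∧ Cns.supp r.constr S

/-- The clause has finitely many variables. -/
def Clause.finSupp (r : Clause V D Pr) : Prop := ∃ S : Finset V, r.suppBy ↑S

/-- The constraint s̃ = ũ ∧ c ∧ d of the derived query, where the input clause is
    r' = p(s̃) ← c ◇ q(t̃) and the current query is Q = ⟨p(ũ) | d⟩. -/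
def stepCns (r' : Clause V D Pr) (Q : Query V D Pr) : Cns V D :=
  fun v => EqArgs r'.hargs Q.args v ∧ r'.constr v ∧ Q.constr v

/-- A derivation step Q ⟹_r Q₁: there is a variant r' of r variable-disjoint from Q
    (the input clause) such that the constraint s̃ = ũ ∧ c ∧ d is satisfiable, and
    Q₁ = ⟨q(t̃) | s̃ = ũ ∧ c ∧ d⟩. -/
def Step (r : Clause V D Pr) (Q Q₁ : Query V D Pr) : Prop :=
  ∃ γ : V ≃ V, ∃ S S' : Set V,
    Q.suppBy S ∧ (r.rename γ).suppBy S' ∧ Disjoint S S' ∧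
    Q.pred = r.hpred ∧
    (∃ v, stepCns (r.rename γ) Q v) ∧
    Q₁ = ⟨(r.rename γ).bpred, (r.rename γ).bargs, stepCns (r.rename γ) Q⟩

/-- Q₀ loops w.r.t. the program `Prog`: there is an infinite derivation of Prog ∪ {Q₀}. -/
def Loops (Prog : Set (Clause V D Pr)) (Q₀ : Query V D Pr) : Prop :=
  ∃ Qs : ℕ → Query V D Pr, Qs 0 = Q₀ ∧ ∀ n, ∃ r ∈ Prog, Step r (Qs n) (Qs (n + 1))

/-- Projection of a sequence onto a set of (0-based) positions, in increasing order. -/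
def projArgs {α : Type} (s : Finset ℕ) (l : List α) : List α :=
  ((s.filter (· < l.length)).sort (· ≤ ·)).filterMap (fun i => l[i]?)

/-- Projection of a query on a set of positions τ. -/
def Query.proj (τ : Pr → Finset ℕ) (Q : Query V D Pr) : Query V D Pr :=
  ⟨Q.pred, projArgs (τ Q.pred) Q.args, Q.constr⟩

/-- Projection of a query on the complementary set of positions τ̄. -/
def Query.coproj (τ : Pr → Finset ℕ) (Q : Query V D Pr) : Query V D Pr :=
  ⟨Q.pred, projArgs (Finset.range Q.args.length \ τ Q.pred) Q.args, Q.constr⟩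

/-- A filter Δ = (τ, δ): a set of positions together with, for each predicate,
    a query over the projected predicate whose constraint is satisfiable. -/
structure PFilter (V D Pr : Type) where
  pos : Pr → Finset ℕ
  delta : Pr → Query V D Pr
  delta_pred : ∀ p, (delta p).pred = p
  delta_sat : ∀ p, ∃ v, (delta p).constr v

/-- Q satisfies Δ when Set(Q|_τ) ⊆ Set(δ(rel(Q))). -/
def PFilter.Satisfies (Δ : PFilter V D Pr) (Q : Query V D Pr) : Prop :=
  (Q.proj Δ.pos).descSet ⊆ (Δ.delta Q.pred).descSet

/-- Q' is Δ-more general than Q. -/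
def PFilter.MoreGen (Δ : PFilter V D Pr) (Q' Q : Query V D Pr) : Prop :=
  (Q.coproj Δ.pos).descSet ⊆ (Q'.coproj Δ.pos).descSet ∧ Δ.Satisfies Q'

/-- Δ is derivation neutral (DN) for the clause r. -/
def PFilter.DN (Δ : PFilter V D Pr) (r : Clause V D Pr) : Prop :=
  ∀ Q Q₁ : Query V D Pr, Q.finSupp → Step r Q Q₁ →
    Δ.Satisfies Q₁ ∧
    ∀ Q' : Query V D Pr, Q'.finSupp → Δ.MoreGen Q' Q →
      ∃ Q₁', Step r Q' Q₁' ∧ Δ.MoreGen Q₁' Q₁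

/-- sat(ũ, Q): taking a fresh variant of Q and existentially quantifying its variables,
    the values of ũ can be matched with the arguments of Q while its constraint holds. -/
def satC (us : List (Trm V D)) (Q : Query V D Pr) : Cns V D :=
  fun v => ∃ w : V → D, us.length = Q.args.length ∧
    (∀ pr ∈ us.zip Q.args, pr.1 v = pr.2 w) ∧ Q.constr w

/-- First DNlog condition: D ⊨ c → ∀_{X̃|τ(p)} [sat(X̃|τ(p), δ(p)) → ∃_𝒴 c],
    with 𝒴 = Ỹ|τ(q) ∪ local_vars(r). -/
def DNlog1 (Δ : PFilter V D Pr) (p q : Pr) (Xs Ys : List V) (L : Set V) (c : Cns V D) : Prop :=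
  ∀ v : V → D, c v →
    ∀ v' : V → D, (∀ x : V, x ∉ projArgs (Δ.pos p) Xs → v' x = v x) →
      satC ((projArgs (Δ.pos p) Xs).map varT) (Δ.delta p) v' →
      ∃ w : V → D, (∀ x : V, x ∉ projArgs (Δ.pos q) Ys → x ∉ L → w x = v' x) ∧ c w

/-- Second DNlog condition: D ⊨ c → sat(Ỹ|τ(q), δ(q)). -/
def DNlog2 (Δ : PFilter V D Pr) (q : Pr) (Ys : List V) (c : Cns V D) : Prop :=
  ∀ v : V → D, c v → satC ((projArgs (Δ.pos q) Ys).map varT) (Δ.delta q) v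

/-- Δ is DNlog for the clause p(X̃) ← c ◇ q(Ỹ) with local variables L. -/
def DNlog (Δ : PFilter V D Pr) (p q : Pr) (Xs Ys : List V) (L : Set V) (c : Cns V D) : Prop :=
  DNlog1 Δ p q Xs Ys L c ∧ DNlog2 Δ q Ys c

end CLP

/-!
A variant of `Q` describes the same set of atoms, so it suffices to treat the variant
`Q' = Q.rename γ`, whose variables lie in `S'`. A valuation witnessing `p([ũ]_v) ∈ Set(Q')`
only matters on `S'`, while `ũ` only reads `v` on `S`; as `S` and `S'` are disjoint, the two
valuations glue to a single `w` that agrees with `v` off `S'` and satisfies `ũ = t̃' ∧ d'`.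
-/

namespace CLP

variable {V D Pr : Type}

theorem eqArgs_iff_map_eq (a b : List (Trm V D)) (w : V → D) :
    EqArgs a b w ↔ a.map (fun t => t w) = b.map (fun t => t w) := by
  induction a generalizing b with
  | nil => cases b <;> simp [EqArgs]
  | cons s a ih =>
    cases b with
    | nil => simp [EqArgs]
    | cons t b =>
      simp only [EqArgs, List.length_cons, Nat.add_right_cancel_iff, List.zip_cons_cons,
        List.forall_mem_cons, List.map_cons, List.cons.injEq, ← ih b]
      tauto

theorem Trm.map_eq_of_supp {ts : List (Trm V D)} {S : Set V} (h : ∀ t ∈ ts, t.supp S)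
    {v w : V → D} (hvw : ∀ x ∈ S, v x = w x) :
    ts.map (fun t => t v) = ts.map (fun t => t w) :=
  List.map_congr_left fun t ht => h t ht v w hvw

theorem Query.descSet_rename (γ : V ≃ V) (Q : Query V D Pr) :
    (Q.rename γ).descSet = Q.descSet := by
  ext A
  constructor
  · rintro ⟨v, hc, rfl⟩
    exact ⟨v ∘ γ, hc, by simp [Query.rename, Function.comp_def]⟩
  · rintro ⟨v, hc, rfl⟩
    have hv : (v ∘ γ.symm) ∘ γ = v := by ext; simp
    refine ⟨v ∘ γ.symm, ?_, ?_⟩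
    · simpa [Query.rename, hv] using hc
    · simp [Query.rename, Function.comp_def]

theorem Query.mem_descSet_iff_of_disjoint {Q : Query V D Pr} {us : List (Trm V D)}
    {S S' : Set V} (hus : ∀ t ∈ us, t.supp S) (hQ : Q.suppBy S') (hdisj : Disjoint S S')
    (v : V → D) :
    Atom.mk Q.pred (us.map (fun t => t v)) ∈ Q.descSet ↔
      ∃ w : V → D, (∀ x ∉ S', w x = v x) ∧ EqArgs us Q.args w ∧ Q.constr w := by
  classical
  have off_S' : ∀ {w : V → D}, (∀ x ∉ S', w x = v x) → ∀ x ∈ S, v x = w x :=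
    fun hw x hx => (hw x (hdisj.notMem_of_mem_left hx)).symm
  constructor
  · rintro ⟨w', hc, heq⟩
    have hargs : us.map (fun t => t v) = Q.args.map (fun t => t w') := (Atom.mk.inj heq).2
    set w := S'.piecewise w' v
    have hw : ∀ x ∉ S', w x = v x := fun x hx => S'.piecewise_eq_of_notMem _ _ hx
    have hww' : ∀ x ∈ S', w x = w' x := fun x hx => S'.piecewise_eq_of_mem _ _ hx
    refine ⟨w, hw, ?_, (hQ.2 w w' hww').2 hc⟩
    rw [eqArgs_iff_map_eq]
    calc us.map (fun t => t w)
        = us.map (fun t => t v) := (Trm.map_eq_of_supp hus (off_S' hw)).symm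
      _ = Q.args.map (fun t => t w') := hargs
      _ = Q.args.map (fun t => t w) := (Trm.map_eq_of_supp hQ.1 hww').symm
  · rintro ⟨w, hw, heq, hc⟩
    refine ⟨w, hc, ?_⟩
    rw [Trm.map_eq_of_supp hus (off_S' hw), (eqArgs_iff_map_eq _ _ _).1 heq]

end CLP

theorem sat_characterizes_membership_general {V D Pr : Type} (Q : CLP.Query V D Pr) (γ : V ≃ V)
    (us : List (CLP.Trm V D)) (S S' : Set V)
    (hus : ∀ t ∈ us, CLP.Trm.supp t S) (hQ' : (Q.rename γ).suppBy S')
    (hdisj : Disjoint S S') (v : V → D) :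
    (CLP.Atom.mk Q.pred (us.map (fun t => t v)) ∈ Q.descSet) ↔
      ∃ w : V → D, (∀ x ∉ S', w x = v x) ∧
        CLP.EqArgs us (Q.rename γ).args w ∧ (Q.rename γ).constr w := by
  rw [← CLP.Query.descSet_rename γ Q]
  exact CLP.Query.mem_descSet_iff_of_disjoint hus hQ' hdisj v

theorem sat_characterizes_membership {V D Pr : Type} (Q : CLP.Query V D Pr) (γ : V ≃ V)
    (us : List (CLP.Trm V D)) (S S' : Set V)
    (hus : ∀ t ∈ us, CLP.Trm.supp t S) (hQ' : (Q.rename γ).suppBy S')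
    (hdisj : Disjoint S S') (hlen : us.length = Q.args.length) (v : V → D) :
    (CLP.Atom.mk Q.pred (us.map (fun t => t v)) ∈ Q.descSet) ↔
      ∃ w : V → D, (∀ x ∉ S', w x = v x) ∧
        CLP.EqArgs us (Q.rename γ).args w ∧ (Q.rename γ).constr w :=
  sat_characterizes_membership_general Q γ us S S' hus hQ' hdisj v
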